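/- arXiv:1211.4752 — 3 statements merged into one kernel-verified Lean document; each statement's English description precedes it below -/
import Mathlib

section
/- Let n = 2N with N ≥ 2. For every l with 1 ≤ l ≤ N−1, the full-weighting restriction R maps the fine-grid Fourier mode w_l^h to c_l times the coarse-grid Fourier mode: R w_l^h = cos²(lπ/(2n)) · w_l^{2h}. -/
open Real Matrix

/-- Fine-grid Fourier mode `w_l^h ∈ ℝ^{n-1}` for `n = 2N`:
components `sin (l j π / (2N))`, `j = 1, …, 2N-1`. -/
noncomputable def fineMode (N l : ℕ) : Fin (2 * N - 1) → ℝ :=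
  fun j => Real.sin (l * ((j : ℕ) + 1) * Real.pi / (2 * N))

/-- Coarse-grid Fourier mode `w_l^{2h} ∈ ℝ^{N-1}`:
components `sin (l i π / N)`, `i = 1, …, N-1`. -/
noncomputable def coarseMode (N l : ℕ) : Fin (N - 1) → ℝ :=
  fun i => Real.sin (l * ((i : ℕ) + 1) * Real.pi / N)

/-- Full-weighting restriction: the `(N-1)×(2N-1)` matrix with
`R_{i,2i-1} = R_{i,2i+1} = 1/4`, `R_{i,2i} = 1/2` and all other entries zero
(indices `i = 1,…,N-1` for rows, `j = 1,…,2N-1` for columns). -/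
noncomputable def fullWeighting (N : ℕ) : Matrix (Fin (N - 1)) (Fin (2 * N - 1)) ℝ :=
  Matrix.of fun i j =>
    if (j : ℕ) + 1 = 2 * ((i : ℕ) + 1) then 1 / 2
    else if (j : ℕ) + 2 = 2 * ((i : ℕ) + 1) ∨ (j : ℕ) = 2 * ((i : ℕ) + 1) then 1 / 4
    else 0

lemma trig_aux (x y : ℝ) :
    1/4 * Real.sin (x - y) + 1/2 * Real.sin x + 1/4 * Real.sin (x + y)
      = Real.cos (y/2)^2 * Real.sin x := by
  have h := Real.cos_sq (y/2)
  rw [show 2 * (y/2) = y by ring] at h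
  rw [Real.sin_sub, Real.sin_add, h]
  ring

set_option maxHeartbeats 2000000 in
/-- for `n = 2N`, `N ≥ 2` and `1 ≤ l ≤ N-1`, full weighting maps the
fine mode `w_l^h` to `cos²(lπ/(2n)) · w_l^{2h}`. -/
theorem fullWeighting_smooth_mode (N : ℕ) (hN : 2 ≤ N) (l : ℕ)
    (hl1 : 1 ≤ l) (hl2 : l ≤ N - 1) :
    (fullWeighting N).mulVec (fineMode N l)
      = (Real.cos (l * Real.pi / (2 * (2 * N))) ^ 2) • coarseMode N l := by
  have hN0 : (N:ℝ) ≠ 0 := Nat.cast_ne_zero.mpr (by omega)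
  funext i
  have hi : (i : ℕ) < N - 1 := i.isLt
  set a : Fin (2*N-1) := ⟨2*i, by omega⟩ with ha
  set b : Fin (2*N-1) := ⟨2*i+1, by omega⟩ with hb
  set c : Fin (2*N-1) := ⟨2*i+2, by omega⟩ with hc
  have hav : (a:ℕ) = 2*i := rfl
  have hbv : (b:ℕ) = 2*i+1 := rfl
  have hcv : (c:ℕ) = 2*i+2 := rfl
  have hsum : (fullWeighting N).mulVec (fineMode N l) i
      = ∑ j ∈ ({a, b, c} : Finset (Fin (2*N-1))), fullWeighting N i j * fineMode N l j := by
    rw [Matrix.mulVec, dotProduct]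
    refine (Finset.sum_subset (Finset.subset_univ _) ?_).symm
    intro j _ hj
    simp only [Finset.mem_insert, Finset.mem_singleton] at hj
    push_neg at hj
    obtain ⟨hja, hjb, hjc⟩ := hj
    have hva : (j:ℕ) ≠ 2*i := fun h => hja (Fin.ext h)
    have hvb : (j:ℕ) ≠ 2*i+1 := fun h => hjb (Fin.ext h)
    have hvc : (j:ℕ) ≠ 2*i+2 := fun h => hjc (Fin.ext h)
    have : fullWeighting N i j = 0 := by
      simp only [fullWeighting, Matrix.of_apply]
      rw [if_neg (by omega), if_neg (by omega)]
    rw [this, zero_mul]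
  have hab : a ≠ b := Fin.ne_of_val_ne (by omega)
  have hac : a ≠ c := Fin.ne_of_val_ne (by omega)
  have hbc : b ≠ c := Fin.ne_of_val_ne (by omega)
  rw [hsum, Finset.sum_insert (by simp [hab, hac]),
    Finset.sum_insert (by simp [hbc]), Finset.sum_singleton]
  have ea : fullWeighting N i a = 1/4 := by
    simp only [fullWeighting, Matrix.of_apply, ha]
    rw [if_neg (by omega), if_pos (by omega)]
  have eb : fullWeighting N i b = 1/2 := by
    simp only [fullWeighting, Matrix.of_apply, hb]
    rw [if_pos (by omega)]
  have ec : fullWeighting N i c = 1/4 := by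
    simp only [fullWeighting, Matrix.of_apply, hc]
    rw [if_neg (by omega), if_pos (by omega)]
  rw [ea, eb, ec]
  simp only [fineMode, coarseMode, Pi.smul_apply, smul_eq_mul, ha, hb, hc]
  push_cast
  have e1 : (l:ℝ) * (2 * ((i:ℕ):ℝ) + 1) * Real.pi / (2 * N)
      = l * (((i:ℕ):ℝ) + 1) * Real.pi / N - l * Real.pi / (2 * N) := by
    field_simp; ring
  have e2 : (l:ℝ) * (2 * ((i:ℕ):ℝ) + 1 + 1) * Real.pi / (2 * N)
      = l * (((i:ℕ):ℝ) + 1) * Real.pi / N := by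
    field_simp; ring
  have e3 : (l:ℝ) * (2 * ((i:ℕ):ℝ) + 2 + 1) * Real.pi / (2 * N)
      = l * (((i:ℕ):ℝ) + 1) * Real.pi / N + l * Real.pi / (2 * N) := by
    field_simp
  have e4 : (l:ℝ) * Real.pi / (2 * (2 * N)) = (l * Real.pi / (2 * N)) / 2 := by
    ring
  rw [e1, e2, e3, e4]
  have := trig_aux (l * (((i:ℕ):ℝ) + 1) * Real.pi / N) (l * Real.pi / (2 * N))
  linarith
end

section
/- Let n = 2N with N ≥ 2. For every l with 1 ≤ l ≤ N−1, the full-weighting restriction R maps the complementary (oscillatory) fine-grid Fourier mode w_{n−l}^h to −s_l times the coarse-grid mode: R w_{n−l}^h = −sin²(lπ/(2n)) · w_l^{2h}. -/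
open Real Matrix

/-!
Replacing `l` by `n - l` multiplies the `k`-th sample of a fine mode by `-(-1)^k`, so full
weighting acts on the oscillatory mode as the stencil `(1, -2, 1)/4` applied to `w_l^h` around
the coarse point `2i`. For a sine wave of frequency `2θ` per fine step this second difference
is `-4 sin² θ` times the centre value, and the centre value is the coarse mode.
-/

theorem Real.sin_sub_sub_two_mul_sin_add_sin_add (a θ : ℝ) :
    sin (a - 2 * θ) - 2 * sin a + sin (a + 2 * θ) = -4 * sin θ ^ 2 * sin a := by
  rw [sin_sub, sin_add, cos_two_mul_eq_one_sub]
  ring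

theorem Fin.sum_ite_val_eq {M : Type*} [AddCommMonoid M] {n a : ℕ} (ha : a < n) (g : ℕ → M) :
    ∑ x : Fin n, (if (x : ℕ) = a then g x else 0) = g a := by
  rw [Fin.sum_univ_eq_sum_range (fun x => if x = a then g x else 0)]
  simp [ha]

theorem fullWeighting_mulVec_apply (N : ℕ) (f : ℕ → ℝ) (i : Fin (N - 1)) :
    (fullWeighting N *ᵥ fun j => f j) i = (f (2 * i) + 2 * f (2 * i + 1) + f (2 * i + 2)) / 4 := by
  have hi : (i : ℕ) + 2 ≤ N := by have := i.2; omega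
  have stencil : ∀ j : Fin (2 * N - 1), fullWeighting N i j * f j
      = (if (j : ℕ) = 2 * i then f j / 4 else 0) + (if (j : ℕ) = 2 * i + 1 then f j / 2 else 0)
        + (if (j : ℕ) = 2 * i + 2 then f j / 4 else 0) := by
    intro j
    simp only [fullWeighting, of_apply]
    split_ifs <;> first | omega | ring
  simp only [mulVec, dotProduct, stencil, Finset.sum_add_distrib]
  rw [Fin.sum_ite_val_eq (g := fun j => f j / 4) (by omega),
    Fin.sum_ite_val_eq (g := fun j => f j / 2) (by omega),
    Fin.sum_ite_val_eq (g := fun j => f j / 4) (by omega)]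
  ring

theorem fineMode_two_mul_sub (N : ℕ) {l : ℕ} (hl : l ≤ 2 * N) (j : Fin (2 * N - 1)) :
    fineMode N (2 * N - l) j = (-1) ^ (j : ℕ) * fineMode N l j := by
  have hN : (N : ℝ) ≠ 0 := Nat.cast_ne_zero.mpr (by have := j.2; omega)
  have reflect : ((2 * N - l : ℕ) : ℝ) * ((j : ℕ) + 1) * π / (2 * N)
      = (((j : ℕ) + 1 : ℕ) : ℝ) * π - l * ((j : ℕ) + 1) * π / (2 * N) := by
    push_cast [Nat.cast_sub hl]
    field_simp
  rw [fineMode, fineMode, reflect, sin_nat_mul_pi_sub, pow_succ]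
  ring

theorem fullWeighting_oscillatory_mode_general (N : ℕ) (l : ℕ)
    (hl2 : l ≤ N - 1) :
    (fullWeighting N).mulVec (fineMode N (2 * N - l))
      = (-(Real.sin (l * Real.pi / (2 * (2 * N))) ^ 2)) • coarseMode N l := by
  funext i
  have hN : (N : ℝ) ≠ 0 := Nat.cast_ne_zero.mpr (by have := i.2; omega)
  let g (k : ℕ) : ℝ := (-1) ^ k * sin (l * (k + 1) * π / (2 * N))
  have alternate : fineMode N (2 * N - l) = fun j : Fin (2 * N - 1) => g j :=
    funext (fineMode_two_mul_sub N (by omega))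
  set θ : ℝ := l * π / (2 * (2 * N))
  set a : ℝ := l * ((i : ℕ) + 1) * π / N
  have left : (l : ℝ) * (((2 * i : ℕ) : ℝ) + 1) * π / (2 * N) = a - 2 * θ := by
    simp only [a, θ]; push_cast; field_simp; ring
  have centre : (l : ℝ) * (((2 * i + 1 : ℕ) : ℝ) + 1) * π / (2 * N) = a := by
    simp only [a]; push_cast; field_simp; ring
  have right : (l : ℝ) * (((2 * i + 2 : ℕ) : ℝ) + 1) * π / (2 * N) = a + 2 * θ := by
    simp only [a, θ]; push_cast; field_simp
  rw [alternate, fullWeighting_mulVec_apply N g]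
  simp only [g, left, centre, right, pow_add, pow_mul, neg_one_sq, one_pow, pow_one,
    Pi.smul_apply, coarseMode, smul_eq_mul]
  linear_combination (1 / 4 : ℝ) * sin_sub_sub_two_mul_sin_add_sin_add a θ

/-- for `n = 2N`, `N ≥ 2` and `1 ≤ l ≤ N-1`, full weighting maps the
oscillatory fine mode `w_{n-l}^h` to `-sin²(lπ/(2n)) · w_l^{2h}`. -/
theorem fullWeighting_oscillatory_mode (N : ℕ) (hN : 2 ≤ N) (l : ℕ)
    (hl1 : 1 ≤ l) (hl2 : l ≤ N - 1) :
    (fullWeighting N).mulVec (fineMode N (2 * N - l))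
      = (-(Real.sin (l * Real.pi / (2 * (2 * N))) ^ 2)) • coarseMode N l :=
  fullWeighting_oscillatory_mode_general N l hl2
end

section
/- For every real λ, every real k ≠ 0 and every θ ∈ (0, π), the perturbation-error eigenvalue of the level-dependent scheme satisfies the uniform bound |k²(e^{iθ} − 1)/(λ − k² e^{iθ})| ≤ 1/cos(θ/2). In particular, for fixed wavenumber k and fixed per-level rotation θ, the spectral radius of the perturbation-error operator is bounded independently of the number of grid points. -/
open Real Complex

/-! With `w = e^{iθ}`, the numerator has modulus `k² |w - 1| = 2 k² |sin (θ/2)|`, while the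
denominator, being `λ - k² w` with `λ` real, has modulus at least its imaginary part
`k² |sin θ| = 2 k² |sin (θ/2)| |cos (θ/2)|`. -/

theorem abs_mul_abs_sin_le_norm_ofReal_sub_mul_exp (lam r θ : ℝ) :
    |r| * |Real.sin θ| ≤ ‖(lam : ℂ) - r * exp (θ * I)‖ := by
  have him : ((lam : ℂ) - r * exp (θ * I)).im = -(r * Real.sin θ) := by
    simp [exp_ofReal_mul_I_im]
  calc |r| * |Real.sin θ| = |((lam : ℂ) - r * exp (θ * I)).im| := by
        rw [him, abs_neg, abs_mul]
    _ ≤ _ := abs_im_le_norm _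

theorem norm_mul_exp_sub_one_mul_abs_cos_half_le (lam r θ : ℝ) :
    ‖(r : ℂ) * (exp (θ * I) - 1)‖ * |Real.cos (θ / 2)| ≤ ‖(lam : ℂ) - r * exp (θ * I)‖ := by
  have hsin : |Real.sin θ| = 2 * |Real.sin (θ / 2)| * |Real.cos (θ / 2)| := by
    nth_rewrite 1 [← mul_div_cancel₀ θ two_ne_zero]
    rw [Real.sin_two_mul, abs_mul, abs_mul, abs_two]
  calc ‖(r : ℂ) * (exp (θ * I) - 1)‖ * |Real.cos (θ / 2)| = |r| * |Real.sin θ| := by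
        rw [norm_mul, norm_real, mul_comm (θ : ℂ), norm_exp_I_mul_ofReal_sub_one, hsin,
          norm_mul, Real.norm_two, Real.norm_eq_abs, Real.norm_eq_abs]
        ring
    _ ≤ _ := abs_mul_abs_sin_le_norm_ofReal_sub_mul_exp lam r θ

theorem perturbation_error_uniform_bound_general (lam k θ : ℝ)
    (hθ₁ : 0 < θ) (hθ₂ : θ < Real.pi) :
    ‖(k : ℂ) ^ 2 * (Complex.exp ((θ : ℂ) * Complex.I) - 1)
        / ((lam : ℂ) - (k : ℂ) ^ 2 * Complex.exp ((θ : ℂ) * Complex.I))‖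
      ≤ 1 / Real.cos (θ / 2) := by
  have hcos : 0 < Real.cos (θ / 2) :=
    Real.cos_pos_of_mem_Ioo ⟨by linarith [Real.pi_pos], by linarith⟩
  have key := norm_mul_exp_sub_one_mul_abs_cos_half_le lam (k ^ 2) θ
  push_cast at key
  rw [abs_of_pos hcos] at key
  rw [norm_div]
  refine div_le_of_le_mul₀ (norm_nonneg _) (by positivity) ?_
  rwa [one_div_mul_eq_div, le_div_iff₀ hcos]

/-- for every real `λ`, real `k ≠ 0` and `θ ∈ (0, π)`, the
perturbation-error eigenvalue of the level-dependent scheme satisfies the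
uniform bound `|k²(e^{iθ} − 1)/(λ − k² e^{iθ})| ≤ 1/cos(θ/2)`, so the spectral
radius of the perturbation-error operator is bounded independently of the
number of grid points. -/
theorem perturbation_error_uniform_bound (lam k θ : ℝ) (hk : k ≠ 0)
    (hθ₁ : 0 < θ) (hθ₂ : θ < Real.pi) :
    ‖(k : ℂ) ^ 2 * (Complex.exp ((θ : ℂ) * Complex.I) - 1)
        / ((lam : ℂ) - (k : ℂ) ^ 2 * Complex.exp ((θ : ℂ) * Complex.I))‖
      ≤ 1 / Real.cos (θ / 2) :=
  perturbation_error_uniform_bound_general lam k θ hθ₁ hθ₂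
end
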